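/- arXiv:2212.14509 — 4 statements merged into one kernel-verified Lean document; each statement's English description precedes it below -/
import Mathlib

section
/- The function c : ℝⁿ × ℝⁿ × [0, t_f] → [0, ∞] defined by c(x,y,t) = ‖ξ−x‖²/t + ‖y−ξ‖²/(t_f−t) for t ∈ (0,t_f), with the conventions c = +∞ when t = 0 and x ≠ ξ or t = t_f and y ≠ ξ, and the singular terms taken as 0 when the numerator vanishes, is lower semicontinuous. -/
/-!
Multiplication on `ℝ≥0∞` is continuous except at `(0, ∞)` and `(∞, 0)`, where the product is `0`,
so it is lower semicontinuous everywhere. As inversion on `ℝ≥0∞` is continuous, a quotient `f / g`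
of continuous `ℝ≥0∞`-valued functions is lower semicontinuous; the conventions `a / 0 = ∞` for
`a > 0` and `0 / 0 = 0`, which give the cost at `t = 0` and `t = t_f`, are built into `ℝ≥0∞`.
-/

open scoped ENNReal

namespace ENNReal

theorem lowerSemicontinuous_mul : LowerSemicontinuous fun p : ℝ≥0∞ × ℝ≥0∞ => p.1 * p.2 := by
  rintro ⟨a, b⟩ y hy
  obtain ⟨ha, hb⟩ := mul_ne_zero_iff.mp (zero_le.trans_lt hy).ne'
  exact ContinuousAt.lowerSemicontinuousAt (ENNReal.tendsto_mul (.inl ha) (.inl hb)) y hy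

theorem lowerSemicontinuous_div {α : Type*} [TopologicalSpace α] {f g : α → ℝ≥0∞}
    (hf : Continuous f) (hg : Continuous g) : LowerSemicontinuous fun x => f x / g x :=
  lowerSemicontinuous_mul.comp (hf.prodMk hg.inv)

end ENNReal

theorem stmt_8_general (n : ℕ) (ξ : EuclideanSpace ℝ (Fin n)) (t_f : ℝ) :
    LowerSemicontinuousOn
      (fun p : EuclideanSpace ℝ (Fin n) × EuclideanSpace ℝ (Fin n) × ℝ =>
        ENNReal.ofReal (‖ξ - p.1‖ ^ 2) / ENNReal.ofReal p.2.2
          + ENNReal.ofReal (‖p.2.1 - ξ‖ ^ 2) / ENNReal.ofReal (t_f - p.2.2))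
      {p | p.2.2 ∈ Set.Icc (0 : ℝ) t_f} := by
  refine LowerSemicontinuous.lowerSemicontinuousOn (.add ?_ ?_) _ <;>
    exact ENNReal.lowerSemicontinuous_div (ENNReal.continuous_ofReal.comp (by fun_prop))
      (ENNReal.continuous_ofReal.comp (by fun_prop))

theorem stmt_8 (n : ℕ) (ξ : EuclideanSpace ℝ (Fin n)) (t_f : ℝ) (htf : 0 < t_f) :
    LowerSemicontinuousOn
      (fun p : EuclideanSpace ℝ (Fin n) × EuclideanSpace ℝ (Fin n) × ℝ =>
        ENNReal.ofReal (‖ξ - p.1‖ ^ 2) / ENNReal.ofReal p.2.2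
          + ENNReal.ofReal (‖p.2.1 - ξ‖ ^ 2) / ENNReal.ofReal (t_f - p.2.2))
      {p | p.2.2 ∈ Set.Icc (0 : ℝ) t_f} :=
  stmt_8_general n ξ t_f
end

section
/- Let μ have support in [-M, 0) and σ be an absolutely continuous probability measure on (0, t_f]. If π is a coupling of (μ, σ) supported on a monotone decreasing set (i.e., for all (x,t), (x',t') in the support, (x − x')(t − t') ≤ 0), then π minimizes ∫ x²/t dπ over all couplings of (μ, σ). -/
open MeasureTheory ENNReal Set

/-!
The cost `c(x, t) = x² / t` has mixed partial derivative `∂ₓ∂ₜ c (u, s) = -2u / s² ≥ 0` on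
`{u < 0 < s}`, and `c(x, t)` vanishes as `x → 0` or `t → ∞`; hence `c(x, t)` is the integral of this
density over the quadrant `Ici (x, t)`. By Tonelli the cost of a coupling `ρ` becomes
`∫ ∂ₓ∂ₜ c (w) · ρ (Iic w) dw`, so it suffices that `π (Iic w) ≤ π' (Iic w)` for every `w`. This is
the Fréchet lower bound `ρ (A ×ˢ B) ≥ ρ (fst⁻¹ A) + ρ (snd⁻¹ B) - 1`, attained by `π` because a
monotone decreasing support cannot meet both `Iic w` and the opposite open quadrant.
-/

theorem ae_mem_of_map_eq {α β : Type*} [MeasurableSpace α] [MeasurableSpace β]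
    {ρ : Measure α} {ν : Measure β} {f : α → β} (hf : Measurable f) (hρ : ρ.map f = ν)
    {s : Set β} (hs : ν sᶜ = 0) : ∀ᵐ a ∂ρ, f a ∈ s :=
  ae_of_ae_map hf.aemeasurable (hρ ▸ mem_ae_iff.2 hs)

def IsMonotoneDecreasing (S : Set (ℝ × ℝ)) : Prop :=
  ∀ p ∈ S, ∀ q ∈ S, (p.1 - q.1) * (p.2 - q.2) ≤ 0

theorem IsMonotoneDecreasing.disjoint_compl_Iic_prod_compl_Iic {S : Set (ℝ × ℝ)}
    (hS : IsMonotoneDecreasing S) {p w : ℝ × ℝ} (hp : p ∈ S) (hpw : p ≤ w) :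
    Disjoint S ((Iic w.1)ᶜ ×ˢ (Iic w.2)ᶜ) := by
  refine disjoint_left.2 fun q hq ⟨hq1, hq2⟩ => ?_
  simp only [mem_compl_iff, mem_Iic, not_le] at hq1 hq2
  nlinarith [hS p hp q hq, hpw.1, hpw.2]

/-- Fréchet's bound `ρ (A ×ˢ B) ≥ ρ (fst⁻¹ A) + ρ (snd⁻¹ B) - ρ univ` is an equality when
`ρ (Aᶜ ×ˢ Bᶜ) = 0`, so such a `ρ` minimises `ρ (A ×ˢ B)` among measures with its marginals. -/
theorem measure_prod_le_of_measure_compl_prod_compl_eq_zero {α β : Type*} [MeasurableSpace α]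
    [MeasurableSpace β] {ρ ρ' : Measure (α × β)} [IsFiniteMeasure ρ]
    (h₁ : ρ.map Prod.fst = ρ'.map Prod.fst) (h₂ : ρ.map Prod.snd = ρ'.map Prod.snd)
    {A : Set α} {B : Set β} (hA : MeasurableSet A) (hB : MeasurableSet B)
    (hAB : ρ (Aᶜ ×ˢ Bᶜ) = 0) : ρ (A ×ˢ B) ≤ ρ' (A ×ˢ B) := by
  set U : Set (α × β) := Prod.fst ⁻¹' A ∪ Prod.snd ⁻¹' B
  have hU : MeasurableSet U := (measurable_fst hA).union (measurable_snd hB)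
  have hUc : Uᶜ = Aᶜ ×ˢ Bᶜ := by ext; simp [U]
  have inclusion_exclusion : ∀ ν : Measure (α × β),
      ν (A ×ˢ B) + ν U = ν.map Prod.fst A + ν.map Prod.snd B := by
    intro ν
    rw [Measure.map_apply measurable_fst hA, Measure.map_apply measurable_snd hB, prod_eq,
      add_comm, measure_union_add_inter _ (measurable_snd hB)]
  have hρU : ρ U = ρ univ := by
    have h := measure_add_measure_compl (μ := ρ) hU
    rwa [hUc, hAB, add_zero] at h
  have hρ'U : ρ' U ≤ ρ univ := calc
    ρ' U ≤ ρ' univ := measure_mono (subset_univ U)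
    _ = ρ univ := by
      rw [← preimage_univ (f := Prod.fst), ← Measure.map_apply measurable_fst .univ, ← h₁,
        Measure.map_apply measurable_fst .univ, preimage_univ]
  refine ENNReal.le_of_add_le_add_right (measure_ne_top ρ univ) ?_
  calc ρ (A ×ˢ B) + ρ univ = ρ' (A ×ˢ B) + ρ' U := by
        rw [← hρU, inclusion_exclusion, h₁, h₂, inclusion_exclusion]
    _ ≤ ρ' (A ×ˢ B) + ρ univ := by gcongr

theorem measure_Iic_le_of_isMonotoneDecreasing {π π' : Measure (ℝ × ℝ)} [IsFiniteMeasure π]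
    (h₁ : π.map Prod.fst = π'.map Prod.fst) (h₂ : π.map Prod.snd = π'.map Prod.snd)
    {S : Set (ℝ × ℝ)} (hπS : π Sᶜ = 0) (hS : IsMonotoneDecreasing S) (w : ℝ × ℝ) :
    π (Iic w) ≤ π' (Iic w) := by
  by_cases hw : ∃ p ∈ S, p ≤ w
  · obtain ⟨p, hp, hpw⟩ := hw
    rw [← Iic_prod_Iic]
    exact measure_prod_le_of_measure_compl_prod_compl_eq_zero h₁ h₂ measurableSet_Iic
      measurableSet_Iic <| measure_mono_null
        (hS.disjoint_compl_Iic_prod_compl_Iic hp hpw).subset_compl_left hπS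
  · have hsub : Iic w ⊆ Sᶜ := fun q hq hqS => hw ⟨q, hqS, hq⟩
    rw [measure_mono_null hsub hπS]
    exact zero_le

/-- The mixed partial derivative `∂ₓ∂ₜ (x² / t) = -2x / t²`, truncated to `0` for `x ≥ 0`. -/
noncomputable def costDensity (w : ℝ × ℝ) : ℝ≥0∞ :=
  ENNReal.ofReal (-2 * w.1) * ENNReal.ofReal (w.2 ^ (-2 : ℝ))

theorem measurable_costDensity : Measurable costDensity := by
  unfold costDensity
  fun_prop

theorem lintegral_Ici_ofReal_neg_two_mul {x : ℝ} (hx : x ≤ 0) :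
    ∫⁻ u in Ici x, ENNReal.ofReal (-2 * u) = ENNReal.ofReal (x ^ 2) := by
  have hpos : ∫⁻ u in Ioi 0, ENNReal.ofReal (-2 * u) = 0 := by
    rw [setLIntegral_congr_fun measurableSet_Ioi fun u (hu : 0 < u) => by
      rw [ENNReal.ofReal_eq_zero]; linarith]
    exact lintegral_zero
  have hint : IntegrableOn (fun u : ℝ => -2 * u) (Icc x 0) :=
    (continuous_const.mul continuous_id).integrableOn_Icc
  have hnonneg : 0 ≤ᵐ[volume.restrict (Icc x 0)] fun u : ℝ => -2 * u :=
    (ae_restrict_iff' measurableSet_Icc).2 (ae_of_all _ fun u hu => by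
      simp only [Pi.zero_apply]; linarith [hu.2])
  rw [← Icc_union_Ioi_eq_Ici hx, lintegral_union measurableSet_Ioi
    (disjoint_left.2 fun _ hu hu' => not_lt.2 hu.2 hu'), hpos, add_zero,
    ← ofReal_integral_eq_lintegral_ofReal hint hnonneg, integral_Icc_eq_integral_Ioc,
    ← intervalIntegral.integral_of_le hx, intervalIntegral.integral_const_mul, integral_id]
  ring_nf

theorem lintegral_Ici_ofReal_rpow_neg_two {t : ℝ} (ht : 0 < t) :
    ∫⁻ s in Ici t, ENNReal.ofReal (s ^ (-2 : ℝ)) = ENNReal.ofReal t⁻¹ := by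
  have hint : IntegrableOn (fun s : ℝ => s ^ (-2 : ℝ)) (Ioi t) :=
    integrableOn_Ioi_rpow_of_lt (by norm_num) ht
  have hnonneg : 0 ≤ᵐ[volume.restrict (Ioi t)] fun s : ℝ => s ^ (-2 : ℝ) :=
    (ae_restrict_iff' measurableSet_Ioi).2 (ae_of_all _ fun s (hs : t < s) =>
      Real.rpow_nonneg (ht.trans hs).le _)
  rw [← setLIntegral_congr Ioi_ae_eq_Ici, ← ofReal_integral_eq_lintegral_ofReal hint hnonneg,
    integral_Ioi_rpow_of_lt (by norm_num) ht]
  norm_num [Real.rpow_neg_one]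

theorem cost_eq_lintegral_Ici_costDensity {x t : ℝ} (hx : x ≤ 0) (ht : 0 < t) :
    ENNReal.ofReal (x ^ 2) / ENNReal.ofReal t = ∫⁻ w in Ici (x, t), costDensity w := by
  rw [← Ici_prod_Ici, Measure.volume_eq_prod, ← Measure.prod_restrict]
  unfold costDensity
  rw [lintegral_prod_mul (f := fun u => ENNReal.ofReal (-2 * u))
    (g := fun s => ENNReal.ofReal (s ^ (-2 : ℝ))) (by fun_prop) (by fun_prop),
    lintegral_Ici_ofReal_neg_two_mul hx, lintegral_Ici_ofReal_rpow_neg_two ht,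
    ENNReal.ofReal_inv_of_pos ht, div_eq_mul_inv]

theorem lintegral_cost_eq_lintegral_costDensity_mul {ρ : Measure (ℝ × ℝ)} [SFinite ρ]
    (hρ : ∀ᵐ p ∂ρ, p.1 ≤ 0 ∧ 0 < p.2) :
    ∫⁻ p, ENNReal.ofReal (p.1 ^ 2) / ENNReal.ofReal p.2 ∂ρ
      = ∫⁻ w, costDensity w * ρ (Iic w) := by
  have hmeas : Measurable fun z : (ℝ × ℝ) × (ℝ × ℝ) => (Ici z.1).indicator costDensity z.2 :=
    (measurable_costDensity.comp measurable_snd).indicator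
      (measurableSet_le measurable_fst measurable_snd)
  calc ∫⁻ p, ENNReal.ofReal (p.1 ^ 2) / ENNReal.ofReal p.2 ∂ρ
      = ∫⁻ p, (∫⁻ w, (Ici p).indicator costDensity w) ∂ρ := by
        refine lintegral_congr_ae (hρ.mono fun p hp => ?_)
        dsimp only
        rw [lintegral_indicator measurableSet_Ici]
        exact cost_eq_lintegral_Ici_costDensity hp.1 hp.2
    _ = ∫⁻ w, (∫⁻ p, (Iic w).indicator (fun _ => costDensity w) p ∂ρ) := by
        rw [lintegral_lintegral_swap hmeas.aemeasurable]
        simp only [indicator, mem_Ici, mem_Iic]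
    _ = ∫⁻ w, costDensity w * ρ (Iic w) := by
        simp only [lintegral_indicator_const measurableSet_Iic]

theorem stmt_10_general (M t_f : ℝ)
    (μ σ : Measure ℝ)
    (hμ : μ (Set.Ico (-M) 0)ᶜ = 0) (hσ : σ (Set.Ioc 0 t_f)ᶜ = 0)
    (π : Measure (ℝ × ℝ)) [IsProbabilityMeasure π]
    (hπ1 : π.map Prod.fst = μ) (hπ2 : π.map Prod.snd = σ)
    (S : Set (ℝ × ℝ)) (hSfull : π Sᶜ = 0)
    (hSmono : ∀ p ∈ S, ∀ q ∈ S, (p.1 - q.1) * (p.2 - q.2) ≤ 0) :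
    ∀ π' : Measure (ℝ × ℝ), IsProbabilityMeasure π' →
      π'.map Prod.fst = μ → π'.map Prod.snd = σ →
      (∫⁻ p, ENNReal.ofReal (p.1 ^ 2) / ENNReal.ofReal p.2 ∂π) ≤
        ∫⁻ p, ENNReal.ofReal (p.1 ^ 2) / ENNReal.ofReal p.2 ∂π' := by
  intro π' _ hπ'1 hπ'2
  have hsupp : ∀ ρ : Measure (ℝ × ℝ), ρ.map Prod.fst = μ → ρ.map Prod.snd = σ →
      ∀ᵐ p ∂ρ, p.1 ≤ 0 ∧ 0 < p.2 := fun ρ h₁ h₂ =>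
    (ae_mem_of_map_eq measurable_fst h₁ hμ).and (ae_mem_of_map_eq measurable_snd h₂ hσ)
      |>.mono fun p hp => ⟨hp.1.2.le, hp.2.1⟩
  rw [lintegral_cost_eq_lintegral_costDensity_mul (hsupp π hπ1 hπ2),
    lintegral_cost_eq_lintegral_costDensity_mul (hsupp π' hπ'1 hπ'2)]
  exact lintegral_mono fun w => mul_le_mul_right
    (measure_Iic_le_of_isMonotoneDecreasing (hπ1.trans hπ'1.symm) (hπ2.trans hπ'2.symm)
      hSfull hSmono w) _

theorem stmt_10 (M t_f : ℝ) (hM : 0 < M) (htf : 0 < t_f)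
    (μ σ : Measure ℝ) [IsProbabilityMeasure μ] [IsProbabilityMeasure σ]
    (hμ : μ (Set.Ico (-M) 0)ᶜ = 0) (hσ : σ (Set.Ioc 0 t_f)ᶜ = 0)
    (hσac : σ ≪ volume)
    (π : Measure (ℝ × ℝ)) [IsProbabilityMeasure π]
    (hπ1 : π.map Prod.fst = μ) (hπ2 : π.map Prod.snd = σ)
    (S : Set (ℝ × ℝ)) (hSfull : π Sᶜ = 0)
    (hSmono : ∀ p ∈ S, ∀ q ∈ S, (p.1 - q.1) * (p.2 - q.2) ≤ 0) :
    ∀ π' : Measure (ℝ × ℝ), IsProbabilityMeasure π' →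
      π'.map Prod.fst = μ → π'.map Prod.snd = σ →
      (∫⁻ p, ENNReal.ofReal (p.1 ^ 2) / ENNReal.ofReal p.2 ∂π) ≤
        ∫⁻ p, ENNReal.ofReal (p.1 ^ 2) / ENNReal.ofReal p.2 ∂π' :=
  stmt_10_general M t_f μ σ hμ hσ π hπ1 hπ2 S hSfull hSmono
end

section
/- Suppose μ is supported in (-M, 0), ν in (0, M), r·t_f > 1, and consider minimizing ∫ (x²/t + y²/(t_f − t)) dπ over probability measures π on ℝ × ℝ × [0, t_f] with marginals μ, ν and t-marginal ≤ r·dt. If π is a minimizer with t-marginal σ(t)dt, then the (x,t)-marginal of π minimizes ∫ x²/t over couplings of (μ, σ·dt), and the (y,t)-marginal minimizes ∫ y²/(t_f − t) over couplings of (σ·dt, ν). -/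
/-!
The cost splits as `∫ c₁ dπ_xt + ∫ c₂ dπ_ty`, and whether a measure is an admissible plan depends
only on these two marginals. A competitor coupling `η` of `(μ, σ)` can be glued with `π_ty` along
their common `t`-marginal `σ`, making `x` and `y` conditionally independent given `t`; the result is
an admissible plan whose cost differs from that of `π` only in the first term. Since the cost of `π`
is finite (it is at most that of `μ ⊗ ν ⊗ uniform`, the uniform law taken on an interval of length
`1 / r` strictly inside `(0, t_f)`), the second term cancels and `π_xt` is optimal. The same
argument with the roles of `x` and `y` exchanged handles `π_ty`.
-/

open MeasureTheory ENNReal ProbabilityTheory Set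

section TransportPlans

variable {X Y T : Type*} [MeasurableSpace X] [MeasurableSpace Y] [MeasurableSpace T]

noncomputable def marginalXT (π : Measure (X × Y × T)) : Measure (X × T) :=
  π.map fun p => (p.1, p.2.2)

noncomputable def marginalTY (π : Measure (X × Y × T)) : Measure (T × Y) :=
  π.map fun p => (p.2.2, p.2.1)

instance (π : Measure (X × Y × T)) [IsProbabilityMeasure π] :
    IsProbabilityMeasure (marginalXT π) :=
  Measure.isProbabilityMeasure_map (by fun_prop)

instance (π : Measure (X × Y × T)) [IsProbabilityMeasure π] :
    IsProbabilityMeasure (marginalTY π) :=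
  Measure.isProbabilityMeasure_map (by fun_prop)

theorem marginalXT_fst (π : Measure (X × Y × T)) : (marginalXT π).fst = π.map Prod.fst := by
  rw [marginalXT, Measure.fst, Measure.map_map (by fun_prop) (by fun_prop)]; rfl

theorem marginalXT_snd (π : Measure (X × Y × T)) :
    (marginalXT π).snd = π.map fun p => p.2.2 := by
  rw [marginalXT, Measure.snd, Measure.map_map (by fun_prop) (by fun_prop)]; rfl

theorem marginalTY_fst (π : Measure (X × Y × T)) :
    (marginalTY π).fst = π.map fun p => p.2.2 := by
  rw [marginalTY, Measure.fst, Measure.map_map (by fun_prop) (by fun_prop)]; rfl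

theorem marginalTY_snd (π : Measure (X × Y × T)) :
    (marginalTY π).snd = π.map fun p => p.2.1 := by
  rw [marginalTY, Measure.snd, Measure.map_map (by fun_prop) (by fun_prop)]; rfl

noncomputable def transportCost (c₁ : X × T → ℝ≥0∞) (c₂ : T × Y → ℝ≥0∞)
    (π : Measure (X × Y × T)) : ℝ≥0∞ :=
  ∫⁻ p, c₁ (p.1, p.2.2) + c₂ (p.2.2, p.2.1) ∂π

theorem transportCost_eq {c₁ : X × T → ℝ≥0∞} {c₂ : T × Y → ℝ≥0∞}
    (hc₁ : Measurable c₁) (hc₂ : Measurable c₂) (π : Measure (X × Y × T)) :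
    transportCost c₁ c₂ π =
      ∫⁻ q, c₁ q ∂(marginalXT π) + ∫⁻ q, c₂ q ∂(marginalTY π) := by
  rw [transportCost, marginalXT, marginalTY,
    lintegral_add_left (f := fun p : X × Y × T => c₁ (p.1, p.2.2)) (by fun_prop),
    lintegral_map hc₁ (by fun_prop), lintegral_map hc₂ (by fun_prop)]

def transportPlans (μ : Measure X) (ν : Measure Y) (θ : Measure T) : Set (Measure (X × Y × T)) :=
  {π | IsProbabilityMeasure π ∧ π.map Prod.fst = μ ∧ π.map (fun p => p.2.1) = ν ∧
    π.map (fun p => p.2.2) ≤ θ}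

theorem mem_transportPlans_of_marginals {μ : Measure X} {ν : Measure Y} {θ : Measure T}
    {π : Measure (X × Y × T)} {ρ : Measure (X × T)} {κ : Measure (T × Y)} [IsProbabilityMeasure ρ]
    (hρ : marginalXT π = ρ) (hκ : marginalTY π = κ)
    (hμ : ρ.fst = μ) (hν : κ.snd = ν) (hθ : κ.fst ≤ θ) : π ∈ transportPlans μ ν θ := by
  subst hρ hκ
  exact ⟨(Measure.isProbabilityMeasure_map_iff (by fun_prop)).1
      ‹IsProbabilityMeasure (marginalXT π)›, (marginalXT_fst π).symm.trans hμ,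
    (marginalTY_snd π).symm.trans hν, (marginalTY_fst π).symm.trans_le hθ⟩

theorem prod_mem_transportPlans {μ : Measure X} {ν : Measure Y} {θ τ : Measure T}
    [IsProbabilityMeasure μ] [IsProbabilityMeasure ν] [IsProbabilityMeasure τ] (hτ : τ ≤ θ) :
    μ.prod (ν.prod τ) ∈ transportPlans μ ν θ := by
  refine ⟨inferInstance, Measure.fst_prod, ?_, ?_⟩
  · rw [show (fun p : X × Y × T => p.2.1) = Prod.fst ∘ Prod.snd from rfl,
      ← Measure.map_map measurable_fst measurable_snd]
    exact (congrArg Measure.fst Measure.snd_prod).trans Measure.fst_prod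
  · rw [show (fun p : X × Y × T => p.2.2) = Prod.snd ∘ Prod.snd from rfl,
      ← Measure.map_map measurable_snd measurable_snd]
    exact ((congrArg Measure.snd Measure.snd_prod).trans Measure.snd_prod).trans_le hτ

variable [StandardBorelSpace Y] [Nonempty Y]

theorem exists_marginalXT_eq_marginalTY_eq
    (ρ : Measure (X × T)) (κ : Measure (T × Y)) [SFinite ρ] [IsFiniteMeasure κ]
    (h : ρ.snd = κ.fst) :
    ∃ π : Measure (X × Y × T), marginalXT π = ρ ∧ marginalTY π = κ := by
  set m := ρ ⊗ₘ Kernel.prodMkLeft X κ.condKernel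
  refine ⟨m.map fun q => (q.1.1, q.2, q.1.2), ?_, ?_⟩
  · rw [marginalXT, Measure.map_map (by fun_prop) (by fun_prop)]
    exact Measure.fst_compProd ρ _
  · rw [marginalTY, Measure.map_map (by fun_prop) (by fun_prop)]
    ext s hs
    conv_rhs => rw [← κ.disintegrate κ.condKernel, ← h]
    rw [Measure.map_apply (by fun_prop) hs, Measure.compProd_apply (hs.preimage (by fun_prop)),
      Measure.compProd_apply hs, Measure.snd, lintegral_map _ measurable_snd]
    · rfl
    · exact Kernel.measurable_kernel_prodMk_left hs

variable {c₁ : X × T → ℝ≥0∞} {c₂ : T × Y → ℝ≥0∞}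
  {μ : Measure X} {ν : Measure Y} {θ : Measure T} {π : Measure (X × Y × T)}

theorem IsMinOn.lintegral_marginalXT_le (hc₁ : Measurable c₁) (hc₂ : Measurable c₂)
    (hπ : π ∈ transportPlans μ ν θ) (hmin : IsMinOn (transportCost c₁ c₂) (transportPlans μ ν θ) π)
    (hfin : transportCost c₁ c₂ π ≠ ∞) (η : Measure (X × T)) [IsProbabilityMeasure η]
    (hημ : η.fst = μ) (hηt : η.snd = π.map fun p => p.2.2) :
    ∫⁻ q, c₁ q ∂(marginalXT π) ≤ ∫⁻ q, c₁ q ∂η := by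
  obtain ⟨hπprob, -, hπν, hπθ⟩ := hπ
  obtain ⟨π', hπ'η, hπ'κ⟩ :=
    exists_marginalXT_eq_marginalTY_eq η (marginalTY π) (hηt.trans (marginalTY_fst π).symm)
  have hle := isMinOn_iff.1 hmin π' (mem_transportPlans_of_marginals hπ'η hπ'κ hημ
    ((marginalTY_snd π).trans hπν) ((marginalTY_fst π).trans_le hπθ))
  rw [transportCost_eq hc₁ hc₂] at hfin hle
  rw [transportCost_eq hc₁ hc₂, hπ'η, hπ'κ] at hle
  exact (ENNReal.add_le_add_iff_right (ENNReal.add_ne_top.1 hfin).2).1 hle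

theorem IsMinOn.lintegral_marginalTY_le (hc₁ : Measurable c₁) (hc₂ : Measurable c₂)
    (hπ : π ∈ transportPlans μ ν θ) (hmin : IsMinOn (transportCost c₁ c₂) (transportPlans μ ν θ) π)
    (hfin : transportCost c₁ c₂ π ≠ ∞) (η : Measure (T × Y)) [IsProbabilityMeasure η]
    (hηt : η.fst = π.map fun p => p.2.2) (hην : η.snd = ν) :
    ∫⁻ q, c₂ q ∂(marginalTY π) ≤ ∫⁻ q, c₂ q ∂η := by
  obtain ⟨hπprob, hπμ, -, hπθ⟩ := hπ
  obtain ⟨π', hπ'ρ, hπ'η⟩ :=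
    exists_marginalXT_eq_marginalTY_eq (marginalXT π) η ((marginalXT_snd π).trans hηt.symm)
  have hle := isMinOn_iff.1 hmin π' (mem_transportPlans_of_marginals hπ'ρ hπ'η
    ((marginalXT_fst π).trans hπμ) hην (hηt.trans_le hπθ))
  rw [transportCost_eq hc₁ hc₂] at hfin hle
  rw [transportCost_eq hc₁ hc₂, hπ'ρ, hπ'η] at hle
  exact (ENNReal.add_le_add_iff_left (ENNReal.add_ne_top.1 hfin).1).1 hle

end TransportPlans

theorem ProbabilityTheory.cond_le_smul_restrict {Ω : Type*} [MeasurableSpace Ω] {μ : Measure Ω}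
    {s t : Set Ω} {c : ℝ≥0∞} (hc : (μ s)⁻¹ ≤ c) (hst : s ⊆ t) : μ[|s] ≤ c • μ.restrict t :=
  Measure.le_iff'.2 fun u => mul_le_mul' hc (Measure.restrict_mono hst le_rfl u)

theorem exists_cond_Icc_le_smul_restrict_Icc {r t_f : ℝ} (hr : 0 < r) (hrtf : 1 < r * t_f) :
    ∃ a b, 0 < a ∧ b < t_f ∧ IsProbabilityMeasure (volume[|Icc a b]) ∧
      volume[|Icc a b] ≤ ENNReal.ofReal r • volume.restrict (Icc 0 t_f) := by
  have hlen : 1 / r < t_f := by rwa [div_lt_iff₀ hr, mul_comm]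
  have hr' : 0 < 1 / r := by positivity
  refine ⟨(t_f - 1 / r) / 2, (t_f + 1 / r) / 2, by linarith, by linarith,
    cond_isProbabilityMeasure_of_finite ?_ measure_Icc_lt_top.ne,
    cond_le_smul_restrict ?_ (Icc_subset_Icc (by linarith) (by linarith))⟩
  · rw [Real.volume_Icc, ne_eq, ENNReal.ofReal_eq_zero, not_le]
    linarith
  · rw [Real.volume_Icc, show (t_f + 1 / r) / 2 - (t_f - 1 / r) / 2 = r⁻¹ by ring,
      ENNReal.ofReal_inv_of_pos hr, inv_inv]

theorem ofReal_sq_div_ofReal_le {x t M s : ℝ} (hx : |x| ≤ M) (hst : s ≤ t) :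
    ENNReal.ofReal (x ^ 2) / ENNReal.ofReal t ≤ ENNReal.ofReal (M ^ 2) / ENNReal.ofReal s :=
  ENNReal.div_le_div (ENNReal.ofReal_le_ofReal (sq_le_sq' (abs_le.1 hx).1 (abs_le.1 hx).2))
    (ENNReal.ofReal_le_ofReal hst)

theorem transportCost_prod_lt_top {M a b t_f : ℝ} (ha : 0 < a) (hb : b < t_f)
    {μ ν τ : Measure ℝ} [IsProbabilityMeasure μ] [IsProbabilityMeasure ν] [IsProbabilityMeasure τ]
    (hμ : ∀ᵐ x ∂μ, |x| ≤ M) (hν : ∀ᵐ y ∂ν, |y| ≤ M) (hτ : ∀ᵐ t ∂τ, t ∈ Icc a b) :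
    transportCost (fun q => ENNReal.ofReal (q.1 ^ 2) / ENNReal.ofReal q.2)
      (fun q => ENNReal.ofReal (q.2 ^ 2) / ENNReal.ofReal (t_f - q.1)) (μ.prod (ν.prod τ)) < ∞ := by
  have hντ : ∀ᵐ q ∂ν.prod τ, |q.1| ≤ M ∧ q.2 ∈ Icc a b :=
    (Measure.quasiMeasurePreserving_fst.ae hν).and (Measure.quasiMeasurePreserving_snd.ae hτ)
  refine (lintegral_le_const (c := ENNReal.ofReal (M ^ 2) / ENNReal.ofReal a
    + ENNReal.ofReal (M ^ 2) / ENNReal.ofReal (t_f - b)) ?_).trans_lt (ENNReal.add_lt_top.2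
    ⟨ENNReal.div_lt_top ofReal_ne_top (ENNReal.ofReal_pos.2 ha).ne',
      ENNReal.div_lt_top ofReal_ne_top (ENNReal.ofReal_pos.2 (sub_pos.2 hb)).ne'⟩)
  filter_upwards [Measure.quasiMeasurePreserving_fst.ae hμ,
    Measure.quasiMeasurePreserving_snd.ae hντ] with p hx ⟨hy, ht⟩
  exact add_le_add (ofReal_sq_div_ofReal_le hx ht.1)
    (ofReal_sq_div_ofReal_le hy (by linarith [ht.2]))

theorem stmt_11_general (M r t_f : ℝ) (hr : 0 < r)
    (hrtf : 1 < r * t_f)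
    (μ ν : Measure ℝ) [IsProbabilityMeasure μ] [IsProbabilityMeasure ν]
    (hμ : μ (Set.Ioo (-M) 0)ᶜ = 0) (hν : ν (Set.Ioo 0 M)ᶜ = 0)
    (Plans : Set (Measure (ℝ × ℝ × ℝ)))
    (hPlans : Plans = {π | IsProbabilityMeasure π ∧
      π.map Prod.fst = μ ∧
      π.map (fun p => p.2.1) = ν ∧
      π.map (fun p => p.2.2) ≤ ENNReal.ofReal r • volume.restrict (Set.Icc 0 t_f)})
    (J : Measure (ℝ × ℝ × ℝ) → ℝ≥0∞)
    (hJ : J = fun π => ∫⁻ p, (ENNReal.ofReal (p.1 ^ 2) / ENNReal.ofReal p.2.2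
      + ENNReal.ofReal (p.2.1 ^ 2) / ENNReal.ofReal (t_f - p.2.2)) ∂π)
    (π : Measure (ℝ × ℝ × ℝ)) (hπmem : π ∈ Plans)
    (hπopt : ∀ π' ∈ Plans, J π ≤ J π')
    (σ : Measure ℝ) (hσ : σ = π.map (fun p => p.2.2)) :
    (∀ η : Measure (ℝ × ℝ), IsProbabilityMeasure η →
      η.map Prod.fst = μ → η.map Prod.snd = σ →
      (∫⁻ p, ENNReal.ofReal (p.1 ^ 2) / ENNReal.ofReal p.2
          ∂(π.map (fun p : ℝ × ℝ × ℝ => (p.1, p.2.2)))) ≤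
        ∫⁻ p, ENNReal.ofReal (p.1 ^ 2) / ENNReal.ofReal p.2 ∂η) ∧
    (∀ η : Measure (ℝ × ℝ), IsProbabilityMeasure η →
      η.map Prod.fst = σ → η.map Prod.snd = ν →
      (∫⁻ p, ENNReal.ofReal (p.2 ^ 2) / ENNReal.ofReal (t_f - p.1)
          ∂(π.map (fun p : ℝ × ℝ × ℝ => (p.2.2, p.2.1)))) ≤
        ∫⁻ p, ENNReal.ofReal (p.2 ^ 2) / ENNReal.ofReal (t_f - p.1) ∂η) := by
  subst hPlans hJ hσ
  set c₁ : ℝ × ℝ → ℝ≥0∞ := fun q => ENNReal.ofReal (q.1 ^ 2) / ENNReal.ofReal q.2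
  set c₂ : ℝ × ℝ → ℝ≥0∞ := fun q => ENNReal.ofReal (q.2 ^ 2) / ENNReal.ofReal (t_f - q.1)
  have hc₁ : Measurable c₁ := by fun_prop
  have hc₂ : Measurable c₂ := by fun_prop
  obtain ⟨a, b, ha, hb, hτ, hτθ⟩ := exists_cond_Icc_le_smul_restrict_Icc hr hrtf
  have hfin : transportCost c₁ c₂ π ≠ ∞ := by
    refine ((hπopt _ (prod_mem_transportPlans hτθ)).trans_lt
      (transportCost_prod_lt_top (M := M) ha hb ?_ ?_ (ae_cond_mem measurableSet_Icc))).ne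
    · exact Filter.mem_of_superset (mem_ae_iff.2 hμ) fun x hx =>
        abs_le.2 ⟨hx.1.le, by linarith [hx.1, hx.2]⟩
    · exact Filter.mem_of_superset (mem_ae_iff.2 hν) fun y hy =>
        abs_le.2 ⟨by linarith [hy.1, hy.2], hy.2.le⟩
  have hmin : IsMinOn (transportCost c₁ c₂) (transportPlans μ ν _) π := isMinOn_iff.2 hπopt
  exact ⟨fun η _ hημ hηt => hmin.lintegral_marginalXT_le hc₁ hc₂ hπmem hfin η hημ hηt,
    fun η _ hηt hην => hmin.lintegral_marginalTY_le hc₁ hc₂ hπmem hfin η hηt hην⟩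

theorem stmt_11 (M r t_f : ℝ) (hM : 0 < M) (hr : 0 < r) (htf : 0 < t_f)
    (hrtf : 1 < r * t_f)
    (μ ν : Measure ℝ) [IsProbabilityMeasure μ] [IsProbabilityMeasure ν]
    (hμ : μ (Set.Ioo (-M) 0)ᶜ = 0) (hν : ν (Set.Ioo 0 M)ᶜ = 0)
    (Plans : Set (Measure (ℝ × ℝ × ℝ)))
    (hPlans : Plans = {π | IsProbabilityMeasure π ∧
      π.map Prod.fst = μ ∧
      π.map (fun p => p.2.1) = ν ∧
      π.map (fun p => p.2.2) ≤ ENNReal.ofReal r • volume.restrict (Set.Icc 0 t_f)})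
    (J : Measure (ℝ × ℝ × ℝ) → ℝ≥0∞)
    (hJ : J = fun π => ∫⁻ p, (ENNReal.ofReal (p.1 ^ 2) / ENNReal.ofReal p.2.2
      + ENNReal.ofReal (p.2.1 ^ 2) / ENNReal.ofReal (t_f - p.2.2)) ∂π)
    (π : Measure (ℝ × ℝ × ℝ)) (hπmem : π ∈ Plans)
    (hπopt : ∀ π' ∈ Plans, J π ≤ J π')
    (σ : Measure ℝ) (hσ : σ = π.map (fun p => p.2.2)) :
    (∀ η : Measure (ℝ × ℝ), IsProbabilityMeasure η →
      η.map Prod.fst = μ → η.map Prod.snd = σ →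
      (∫⁻ p, ENNReal.ofReal (p.1 ^ 2) / ENNReal.ofReal p.2
          ∂(π.map (fun p : ℝ × ℝ × ℝ => (p.1, p.2.2)))) ≤
        ∫⁻ p, ENNReal.ofReal (p.1 ^ 2) / ENNReal.ofReal p.2 ∂η) ∧
    (∀ η : Measure (ℝ × ℝ), IsProbabilityMeasure η →
      η.map Prod.fst = σ → η.map Prod.snd = ν →
      (∫⁻ p, ENNReal.ofReal (p.2 ^ 2) / ENNReal.ofReal (t_f - p.1)
          ∂(π.map (fun p : ℝ × ℝ × ℝ => (p.2.2, p.2.1)))) ≤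
        ∫⁻ p, ENNReal.ofReal (p.2 ^ 2) / ENNReal.ofReal (t_f - p.1) ∂η) :=
  stmt_11_general M r t_f hr hrtf μ ν hμ hν Plans hPlans J hJ π hπmem hπopt σ hσ
end

section
/- Let μ, ν be probability measures on ℝⁿ, ξ ∈ ℝⁿ, and define pushforwards μ̃ = d_ξ # μ and ν̃ = d_ξ # ν on [0,∞) where d_ξ(x) = ‖x − ξ‖. Then the infimum of ∫ (‖ξ−x‖²/t + ‖y−ξ‖²/(t_f−t)) dπ over couplings π of (μ, ν) with t-marginal density ≤ r equals the infimum of ∫ (u²/t + v²/(t_f−t)) dπ̃ over couplings π̃ of (μ̃, ν̃) with t-marginal density ≤ r. -/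
/-!
The cost factors as `G ∘ T` with `T = (d_ξ, d_ξ, id)`, so pushing a plan forward by `T` gives a
radial plan with the same cost and the same time marginal. Conversely a radial plan `ρ` lifts:
disintegrate `μ` and `ν` along `d_ξ` (regular conditional distributions exist because the source
is standard Borel) and draw each endpoint from its conditional law given its radius. The lifted
plan has marginals `μ`, `ν` and is pushed forward by `T` back to `ρ`, hence has the same cost.
-/

open MeasureTheory ENNReal ProbabilityTheory

namespace MeasureTheory.Measure

variable {α β γ δ : Type*} [MeasurableSpace α] [MeasurableSpace β] [MeasurableSpace γ]
  [MeasurableSpace δ]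

lemma map_comp_eq_comp_map {π : Measure β} {L : Kernel β α} {κ : Kernel γ δ} {g : α → δ}
    {h : β → γ} (hg : Measurable g) (hh : Measurable h)
    (hL : ∀ᵐ b ∂π, (L b).map g = κ (h b)) : (L ∘ₘ π).map g = κ ∘ₘ π.map h := by
  ext s hs
  rw [map_apply hg hs, bind_apply (hg hs) L.aemeasurable, bind_apply hs κ.aemeasurable,
    lintegral_map (κ.measurable_coe hs) hh]
  refine lintegral_congr_ae ?_
  filter_upwards [hL] with b hb
  rw [← map_apply hg hs, hb]

end MeasureTheory.Measure

open Measure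

section Disintegration

variable {X X' Y Y' Z : Type*} [MeasurableSpace X] [MeasurableSpace X'] [MeasurableSpace Y]
  [MeasurableSpace Y'] [MeasurableSpace Z]
  [StandardBorelSpace X] [Nonempty X] [MeasurableEq Y]
  [StandardBorelSpace X'] [Nonempty X'] [MeasurableEq Y']

theorem exists_isMarkovKernel_comp_map_eq (μ : Measure X) [IsFiniteMeasure μ] {f : X → Y}
    (hf : Measurable f) :
    ∃ κ : Kernel Y X, IsMarkovKernel κ ∧ κ ∘ₘ μ.map f = μ ∧
      ∀ᵐ y ∂μ.map f, (κ y).map f = dirac y := by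
  refine ⟨condDistrib id f μ, inferInstance, ?_, ?_⟩
  · rw [condDistrib_comp_map hf.aemeasurable aemeasurable_id, map_id]
  · have hgraph : ∀ᵐ p ∂μ.map (fun x => (f x, id x)), f p.2 = p.1 :=
      (ae_map_iff (hf.prodMk measurable_id).aemeasurable
        (measurableSet_eq_fun (hf.comp measurable_snd) measurable_fst)).2
        (ae_of_all _ fun _ => rfl)
    rw [← compProd_map_condDistrib aemeasurable_id] at hgraph
    filter_upwards [ae_ae_of_ae_compProd hgraph] with y hy
    rw [map_congr hy, Measure.map_const, measure_univ, one_smul]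

theorem exists_map_prodMap_eq {μ : Measure X} {ν : Measure X'} [IsFiniteMeasure μ]
    [IsFiniteMeasure ν] {f : X → Y} {g : X' → Y'} (hf : Measurable f) (hg : Measurable g)
    {ρ : Measure (Y × Y' × Z)} (hρ₁ : ρ.map Prod.fst = μ.map f)
    (hρ₂ : ρ.map (fun p => p.2.1) = ν.map g) :
    ∃ π : Measure (X × X' × Z), π.map Prod.fst = μ ∧ π.map (fun p => p.2.1) = ν ∧
      π.map (Prod.map f (Prod.map g id)) = ρ := by
  obtain ⟨κ, _, hκ, hκf⟩ := exists_isMarkovKernel_comp_map_eq μ hf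
  obtain ⟨η, _, hη, hηg⟩ := exists_isMarkovKernel_comp_map_eq ν hg
  set L := κ ∥ₖ (η ∥ₖ Kernel.id) with hL
  have hLb : ∀ b : Y × Y' × Z, L b = (κ b.1).prod ((η b.2.1).prod (dirac b.2.2)) := fun b => by
    simp [hL, Kernel.parallelComp_apply, Kernel.id_apply]
  have hL₁ : ∀ b, (L b).map Prod.fst = κ b.1 := fun b => by simp [hLb]
  have hL₂ : ∀ b, (L b).map (fun p => p.2.1) = η b.2.1 := fun b => by
    change map (Prod.fst ∘ Prod.snd) _ = _
    rw [hLb, ← map_map measurable_fst measurable_snd]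
    simp
  have hLT : ∀ᵐ b ∂ρ, (L b).map (Prod.map f (Prod.map g id)) = dirac b := by
    have hκ' : ∀ᵐ b ∂ρ, (κ b.1).map f = dirac b.1 := by
      rw [← hρ₁] at hκf
      exact ae_of_ae_map measurable_fst.aemeasurable hκf
    have hη' : ∀ᵐ b ∂ρ, (η b.2.1).map g = dirac b.2.1 := by
      rw [← hρ₂] at hηg
      exact ae_of_ae_map measurable_snd.fst.aemeasurable hηg
    filter_upwards [hκ', hη'] with b hb₁ hb₂
    rw [hLb, ← map_prod_map _ _ hf (hg.prodMap measurable_id),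
      ← map_prod_map _ _ hg measurable_id, hb₁, hb₂, map_id, dirac_prod_dirac, dirac_prod_dirac]
  refine ⟨L ∘ₘ ρ, ?_, ?_, ?_⟩
  · rw [map_comp_eq_comp_map measurable_fst measurable_fst (ae_of_all _ hL₁), hρ₁, hκ]
  · rw [map_comp_eq_comp_map measurable_snd.fst measurable_snd.fst (ae_of_all _ hL₂), hρ₂, hη]
  · rw [map_comp_eq_comp_map (hf.prodMap (hg.prodMap measurable_id)) measurable_id
      (κ := Kernel.id) hLT, map_id, id_comp]

theorem exists_coupling_lintegral_iff (μ : Measure X) (ν : Measure X') [IsFiniteMeasure μ]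
    [IsFiniteMeasure ν] {f : X → Y} {g : X' → Y'} (hf : Measurable f) (hg : Measurable g)
    (P : Measure Z → Prop) {F : X × X' × Z → ℝ≥0∞} {G : Y × Y' × Z → ℝ≥0∞} (hG : Measurable G)
    (hFG : ∀ p, F p = G (Prod.map f (Prod.map g id) p)) (c : ℝ≥0∞) :
    (∃ π : Measure (X × X' × Z), IsProbabilityMeasure π ∧ π.map Prod.fst = μ ∧
        π.map (fun p => p.2.1) = ν ∧ P (π.map (fun p => p.2.2)) ∧ c = ∫⁻ p, F p ∂π) ↔
      ∃ ρ : Measure (Y × Y' × Z), IsProbabilityMeasure ρ ∧ ρ.map Prod.fst = μ.map f ∧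
        ρ.map (fun p => p.2.1) = ν.map g ∧ P (ρ.map (fun p => p.2.2)) ∧ c = ∫⁻ p, G p ∂ρ := by
  have hT : Measurable (Prod.map f (Prod.map g (id : Z → Z))) :=
    hf.prodMap (hg.prodMap measurable_id)
  constructor
  · rintro ⟨π, hπ, hπ₁, hπ₂, hπ₃, rfl⟩
    refine ⟨π.map _, isProbabilityMeasure_map hT.aemeasurable, ?_, ?_, ?_, ?_⟩
    · rw [map_map measurable_fst hT, ← hπ₁, map_map hf measurable_fst]; rfl
    · rw [map_map measurable_snd.fst hT, ← hπ₂, map_map hg measurable_snd.fst]; rfl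
    · rwa [map_map measurable_snd.snd hT]
    · rw [lintegral_map hG hT]; simp_rw [hFG]
  · rintro ⟨ρ, hρ, hρ₁, hρ₂, hρ₃, rfl⟩
    obtain ⟨π, hπ₁, hπ₂, hπT⟩ := exists_map_prodMap_eq hf hg hρ₁ hρ₂
    have hπ₃ : π.map (fun p => p.2.2) = ρ.map (fun p => p.2.2) := by
      rw [← hπT, map_map measurable_snd.snd hT]; rfl
    refine ⟨π, ?_, hπ₁, hπ₂, hπ₃ ▸ hρ₃, ?_⟩
    · rwa [← isProbabilityMeasure_map_iff hT.aemeasurable, hπT]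
    · rw [← hπT, lintegral_map hG hT]; simp_rw [hFG]

end Disintegration

theorem stmt_15_general (n : ℕ) (μ ν : Measure (EuclideanSpace ℝ (Fin n)))
    [IsProbabilityMeasure μ] [IsProbabilityMeasure ν]
    (ξ : EuclideanSpace ℝ (Fin n)) (r t_f : ℝ) :
    sInf {c : ℝ≥0∞ |
      ∃ π : Measure (EuclideanSpace ℝ (Fin n) × EuclideanSpace ℝ (Fin n) × ℝ),
        IsProbabilityMeasure π ∧
        π.map Prod.fst = μ ∧
        π.map (fun p => p.2.1) = ν ∧
        π.map (fun p => p.2.2) ≤ ENNReal.ofReal r • volume.restrict (Set.Icc 0 t_f) ∧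
        c = ∫⁻ p, (ENNReal.ofReal (‖ξ - p.1‖ ^ 2) / ENNReal.ofReal p.2.2
          + ENNReal.ofReal (‖p.2.1 - ξ‖ ^ 2) / ENNReal.ofReal (t_f - p.2.2)) ∂π}
    = sInf {c : ℝ≥0∞ |
      ∃ π : Measure (ℝ × ℝ × ℝ),
        IsProbabilityMeasure π ∧
        π.map Prod.fst = μ.map (fun x => ‖x - ξ‖) ∧
        π.map (fun p => p.2.1) = ν.map (fun y => ‖y - ξ‖) ∧
        π.map (fun p => p.2.2) ≤ ENNReal.ofReal r • volume.restrict (Set.Icc 0 t_f) ∧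
        c = ∫⁻ p, (ENNReal.ofReal (p.1 ^ 2) / ENNReal.ofReal p.2.2
          + ENNReal.ofReal (p.2.1 ^ 2) / ENNReal.ofReal (t_f - p.2.2)) ∂π} := by
  have hdist : Measurable fun x : EuclideanSpace ℝ (Fin n) => ‖x - ξ‖ := by fun_prop
  congr 1
  ext c
  simp only [Set.mem_ofPred_eq]
  refine exists_coupling_lintegral_iff μ ν hdist hdist
    (· ≤ ENNReal.ofReal r • volume.restrict (Set.Icc 0 t_f)) ?_ (fun p => ?_) c
  · fun_prop
  · simp [norm_sub_rev ξ]

theorem stmt_15 (n : ℕ) (μ ν : Measure (EuclideanSpace ℝ (Fin n)))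
    [IsProbabilityMeasure μ] [IsProbabilityMeasure ν]
    (ξ : EuclideanSpace ℝ (Fin n)) (r t_f : ℝ) (hr : 0 < r) (htf : 0 < t_f)
    (hrtf : 1 < r * t_f) :
    sInf {c : ℝ≥0∞ |
      ∃ π : Measure (EuclideanSpace ℝ (Fin n) × EuclideanSpace ℝ (Fin n) × ℝ),
        IsProbabilityMeasure π ∧
        π.map Prod.fst = μ ∧
        π.map (fun p => p.2.1) = ν ∧
        π.map (fun p => p.2.2) ≤ ENNReal.ofReal r • volume.restrict (Set.Icc 0 t_f) ∧
        c = ∫⁻ p, (ENNReal.ofReal (‖ξ - p.1‖ ^ 2) / ENNReal.ofReal p.2.2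
          + ENNReal.ofReal (‖p.2.1 - ξ‖ ^ 2) / ENNReal.ofReal (t_f - p.2.2)) ∂π}
    = sInf {c : ℝ≥0∞ |
      ∃ π : Measure (ℝ × ℝ × ℝ),
        IsProbabilityMeasure π ∧
        π.map Prod.fst = μ.map (fun x => ‖x - ξ‖) ∧
        π.map (fun p => p.2.1) = ν.map (fun y => ‖y - ξ‖) ∧
        π.map (fun p => p.2.2) ≤ ENNReal.ofReal r • volume.restrict (Set.Icc 0 t_f) ∧
        c = ∫⁻ p, (ENNReal.ofReal (p.1 ^ 2) / ENNReal.ofReal p.2.2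
          + ENNReal.ofReal (p.2.1 ^ 2) / ENNReal.ofReal (t_f - p.2.2)) ∂π} :=
  stmt_15_general n μ ν ξ r t_f
end
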